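/- arXiv:2502.20813 — 5 statements merged into one kernel-verified Lean document; each statement's English description precedes it below -/
import Mathlib

section
/- Let 0<q<1, b<0<a, c,d ∈ ℂ with d = conj(c) and c ∉ ℝ. Define D as the q-difference operator D f(x) = σ⁺(x)(f(qx)-f(x)) + σ⁻(x)(f(x/q)-f(x)) with σ⁺(x) = -(q/(ab))(c-1/x)(d-1/x), σ⁻(x) = -(q²/(ab))(a/q-1/x)(b/q-1/x). Then D maps the polynomial ring ℝ[x] (restricted to x ≠ 0) into itself; that is, for every polynomial p, the function Dp extends to a polynomial. -/
/-!
Write `y = x⁻¹`. Both coefficients of `D` are quadratic in `y`, and the `y²`-coefficient of `σ⁻`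
is `q` times that of `σ⁺`. The differences `p(qx) - p(x)` and `p(x/q) - p(x)` vanish at `0`, so
they are divisible by `x`, which absorbs the `y`-terms. For the `y²`-terms, the combination
`(p(qx) - p(x)) + q (p(x/q) - p(x))` also has vanishing linear coefficient, since
`(q - 1) + q (q⁻¹ - 1) = 0`, so it is divisible by `x²`. The polynomial is real because
`(c - y)(c̄ - y) = |c|² - 2 Re c · y + y²`.
-/

open Polynomial

namespace Polynomial

variable {K : Type*} [Field K]

theorem X_dvd_comp_C_mul_X_sub (q : K) (p : K[X]) : X ∣ p.comp (C q * X) - p := by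
  simp [X_dvd_iff]

theorem X_sq_dvd_comp_C_mul_X_sub_add {q : K} (hq : q ≠ 0) (p : K[X]) :
    X ^ 2 ∣ (p.comp (C q * X) - p) + C q * (p.comp (C q⁻¹ * X) - p) := by
  rw [X_pow_dvd_iff]
  intro n hn
  interval_cases n
  · simp
  · simp only [coeff_add, coeff_sub, coeff_C_mul, comp_C_mul_X_coeff, pow_one]
    field_simp
    ring

theorem exists_eval_eq_of_inv_quadratic_qDifference {q : K} (hq : q ≠ 0) (α β γ α' β' : K)
    (p : K[X]) :
    ∃ P : K[X], ∀ x : K, x ≠ 0 →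
      (α + β * x⁻¹ + γ * x⁻¹ ^ 2) * (p.eval (q * x) - p.eval x)
        + (α' + β' * x⁻¹ + q * γ * x⁻¹ ^ 2) * (p.eval (x / q) - p.eval x) = P.eval x := by
  obtain ⟨R₁, hR₁⟩ := X_dvd_comp_C_mul_X_sub q p
  obtain ⟨R₂, hR₂⟩ := X_dvd_comp_C_mul_X_sub q⁻¹ p
  obtain ⟨R, hR⟩ := X_sq_dvd_comp_C_mul_X_sub_add hq p
  refine ⟨C α * (X * R₁) + C α' * (X * R₂) + C β * R₁ + C β' * R₂ + C γ * R, fun x hx => ?_⟩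
  replace hR₁ := congrArg (eval x) hR₁
  replace hR₂ := congrArg (eval x) hR₂
  replace hR := congrArg (eval x) hR
  simp only [eval_add, eval_sub, eval_mul, eval_comp, eval_C, eval_X, eval_pow] at hR₁ hR₂ hR ⊢
  rw [← div_eq_inv_mul] at hR₂ hR
  rw [hR₁, hR₂] at hR ⊢
  have hR' : eval x R₁ = x * eval x R - q * eval x R₂ :=
    mul_left_cancel₀ hx (by linear_combination hR)
  rw [hR']
  field_simp
  ring

end Polynomial

theorem Complex.sub_ofReal_mul_conj_sub_ofReal (c : ℂ) (y : ℝ) :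
    (c - y) * (starRingEnd ℂ c - y) = ((Complex.normSq c - 2 * c.re * y + y ^ 2 : ℝ) : ℂ) := by
  apply Complex.ext <;> simp [Complex.normSq_apply, sq] <;> ring

theorem bigQJacobi_D_preserves_polynomials_general
    (q a b : ℝ) (c d : ℂ)
    (hq : 0 < q)
    (hd : d = starRingEnd ℂ c)
    (p : Polynomial ℝ) :
    ∃ P : Polynomial ℝ, ∀ x : ℝ, x ≠ 0 →
      (-((q : ℂ)/((a : ℂ)*(b : ℂ))) * (c - (x : ℂ)⁻¹) * (d - (x : ℂ)⁻¹))
          * ((p.eval (q * x) : ℝ) - (p.eval x : ℝ))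
        + (-((q : ℂ)^2/((a : ℂ)*(b : ℂ))) * ((a : ℂ)/(q : ℂ) - (x : ℂ)⁻¹)
            * ((b : ℂ)/(q : ℂ) - (x : ℂ)⁻¹))
          * ((p.eval (x / q) : ℝ) - (p.eval x : ℝ))
      = (P.eval x : ℝ) := by
  obtain ⟨P, hP⟩ := exists_eval_eq_of_inv_quadratic_qDifference hq.ne'
    (-(q / (a * b)) * Complex.normSq c) (q / (a * b) * (2 * c.re)) (-(q / (a * b)))
    (-(q ^ 2 / (a * b)) * (a / q * (b / q))) (q ^ 2 / (a * b) * (a / q + b / q)) p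
  refine ⟨P, fun x hx => ?_⟩
  have hcd := Complex.sub_ofReal_mul_conj_sub_ofReal c x⁻¹
  rw [← hP x hx, hd]
  push_cast at hcd ⊢
  linear_combination (-((q : ℂ) / (a * b)) * (((p.eval (q * x) : ℝ) : ℂ) - (p.eval x : ℝ))) * hcd

/-- The univariate big q-Jacobi q-difference operator `D` maps `ℝ[x]` to itself:
for every real polynomial `p`, the function `Dp` (defined on `x ≠ 0`) extends to a
real polynomial. -/
theorem bigQJacobi_D_preserves_polynomials
    (q a b : ℝ) (c d : ℂ)
    (hq : 0 < q) (hq1 : q < 1) (hb : b < 0) (ha : 0 < a)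
    (hd : d = starRingEnd ℂ c) (hc : c.im ≠ 0)
    (p : Polynomial ℝ) :
    ∃ P : Polynomial ℝ, ∀ x : ℝ, x ≠ 0 →
      (-((q : ℂ)/((a : ℂ)*(b : ℂ))) * (c - (x : ℂ)⁻¹) * (d - (x : ℂ)⁻¹))
          * ((p.eval (q * x) : ℝ) - (p.eval x : ℝ))
        + (-((q : ℂ)^2/((a : ℂ)*(b : ℂ))) * ((a : ℂ)/(q : ℂ) - (x : ℂ)⁻¹)
            * ((b : ℂ)/(q : ℂ) - (x : ℂ)⁻¹))
          * ((p.eval (x / q) : ℝ) - (p.eval x : ℝ))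
      = (P.eval x : ℝ) :=
  bigQJacobi_D_preserves_polynomials_general q a b c d hq hd p
end

section
/- Let 0<q<1, b<0<a, c,d ∈ ℂ with d = conj(c), c ∉ ℝ. Let I~ = {b⁻¹qⁿ : n≥1} ∪ {0} ∪ {a⁻¹qⁿ : n≥1} ⊂ ℝ, and let D be the univariate big q-Jacobi q-difference operator. If f ∈ ℝ[x] attains its minimum over I~ at a point x̃ ∈ I~, then D f(x̃) ≥ 0 (positive maximum principle). -/
/-!
At a nonzero lattice point `x̃ = e⁻¹qⁿ` both neighbours `qx̃` and `x̃/q` lie in `Ĩ`, except for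
the outermost point `e⁻¹q`, where the weight `σ⁻` vanishes; since `σ⁺ ≥ 0` and `σ⁻ ≥ 0` on `Ĩ`,
both terms of `Df(x̃)` are nonnegative. At `x̃ = 0` the operator is only defined by continuity.
Since `Ĩ` accumulates at `0` from both sides, a minimum at `0` forces
`f = f(0) + x² r` with `r(0) ≥ 0`; for such `f` the singular terms of `Df` cancel and
`Df(0) = (1 - q)(1 - q²) r(0) / (-ab) ≥ 0`.
-/

open Filter Topology Polynomial

namespace BigQJacobi

noncomputable section

variable {q a b : ℝ} {c : ℂ}

def sigmaPlus (q a b : ℝ) (c : ℂ) (x : ℝ) : ℝ := -(q / (a * b)) * Complex.normSq (c - x⁻¹)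

def sigmaMinus (q a b x : ℝ) : ℝ := -(q ^ 2 / (a * b)) * ((a / q - x⁻¹) * (b / q - x⁻¹))

/-- The big q-Jacobi operator at `x ≠ 0`, with `d = conj c` built in. -/
def op (q a b : ℝ) (c : ℂ) (f : ℝ → ℝ) (x : ℝ) : ℝ :=
  sigmaPlus q a b c x * (f (q * x) - f x) + sigmaMinus q a b x * (f (x / q) - f x)

/-- The branch `{e⁻¹qⁿ : n ≥ 1}` of the lattice `Ĩ`. -/
def ray (q e : ℝ) : Set ℝ := {x | ∃ n : ℕ, 1 ≤ n ∧ x = e⁻¹ * q ^ n}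

end

theorem ofReal_op (f : ℝ → ℝ) (x : ℝ) :
    (op q a b c f x : ℂ) =
      (-((q : ℂ) / ((a : ℂ) * (b : ℂ))) * (c - (x : ℂ)⁻¹) * (starRingEnd ℂ c - (x : ℂ)⁻¹))
          * ((f (q * x) : ℂ) - (f x : ℂ))
        + (-((q : ℂ) ^ 2 / ((a : ℂ) * (b : ℂ))) * ((a : ℂ) / (q : ℂ) - (x : ℂ)⁻¹)
            * ((b : ℂ) / (q : ℂ) - (x : ℂ)⁻¹))
          * ((f (x / q) : ℂ) - (f x : ℂ)) := by
  have hconj : starRingEnd ℂ c - (x : ℂ)⁻¹ = starRingEnd ℂ (c - (x : ℂ)⁻¹) := by simp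
  rw [hconj, mul_assoc _ (c - _), Complex.mul_conj]
  simp only [op, sigmaPlus, sigmaMinus]
  push_cast
  ring

theorem op_swap (c : ℂ) (f : ℝ → ℝ) : op q a b c f = op q b a c f := by
  ext x
  simp only [op, sigmaPlus, sigmaMinus, mul_comm a b]
  ring

theorem sigmaPlus_nonneg (hq : 0 ≤ q) (hab : a * b < 0) (x : ℝ) : 0 ≤ sigmaPlus q a b c x :=
  mul_nonneg (neg_nonneg.2 (div_nonpos_of_nonneg_of_nonpos hq hab.le)) (Complex.normSq_nonneg _)

theorem sigmaMinus_inv_mul_self : sigmaMinus q a b (a⁻¹ * q) = 0 := by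
  rw [sigmaMinus, mul_inv, inv_inv, ← div_eq_mul_inv, sub_self, zero_mul, mul_zero]

theorem sigmaMinus_nonneg_of_mem_ray (hq : 0 < q) (hq1 : q ≤ 1) (hab : a * b < 0) {x : ℝ}
    (hx : x ∈ ray q a) : 0 ≤ sigmaMinus q a b x := by
  obtain ⟨n, hn, rfl⟩ := hx
  have ha : a ≠ 0 := left_ne_zero_of_mul hab.ne
  have hqn : 0 < q ^ n := pow_pos hq n
  -- the second factor below is negative because `a` and `b` have opposite signs
  have hfactor : (a / q - (a⁻¹ * q ^ n)⁻¹) * (b / q - (a⁻¹ * q ^ n)⁻¹)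
      = (q⁻¹ - (q ^ n)⁻¹) * (a * b / q - a ^ 2 / q ^ n) := by
    field_simp
  have hinv : q⁻¹ ≤ (q ^ n)⁻¹ :=
    inv_anti₀ hqn (pow_le_of_le_one hq.le hq1 (by omega))
  have hsq : 0 ≤ a ^ 2 / q ^ n := by positivity
  have hpos : 0 ≤ -(q ^ 2 / (a * b)) :=
    neg_nonneg.2 (div_nonpos_of_nonneg_of_nonpos (by positivity) hab.le)
  rw [sigmaMinus, hfactor]
  exact mul_nonneg hpos (mul_nonneg_of_nonpos_of_nonpos (by linarith)
    (by linarith [div_neg_of_neg_of_pos hab hq]))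

theorem op_nonneg_of_isMinOn_ray (hq : 0 < q) (hq1 : q ≤ 1) (hab : a * b < 0)
    {S : Set ℝ} {f : ℝ → ℝ} {x : ℝ} (hS : ray q a ⊆ S) (hx : x ∈ ray q a)
    (hmin : IsMinOn f S x) : 0 ≤ op q a b c f x := by
  have hle : ∀ y ∈ ray q a, 0 ≤ f y - f x := fun y hy =>
    sub_nonneg.2 (isMinOn_iff.1 hmin y (hS hy))
  obtain ⟨n, hn, rfl⟩ := hx
  have hplus : 0 ≤ sigmaPlus q a b c (a⁻¹ * q ^ n) * (f (q * (a⁻¹ * q ^ n)) - f (a⁻¹ * q ^ n)) :=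
    mul_nonneg (sigmaPlus_nonneg hq.le hab _) (hle _ ⟨n + 1, by omega, by ring⟩)
  have hminus : 0 ≤ sigmaMinus q a b (a⁻¹ * q ^ n) * (f (a⁻¹ * q ^ n / q) - f (a⁻¹ * q ^ n)) := by
    obtain rfl | ⟨m, hm, rfl⟩ : n = 1 ∨ ∃ m, 1 ≤ m ∧ n = m + 1 :=
      hn.eq_or_lt.imp Eq.symm fun h => ⟨n - 1, by omega, by omega⟩
    · rw [pow_one, sigmaMinus_inv_mul_self, zero_mul]
    · refine mul_nonneg (sigmaMinus_nonneg_of_mem_ray hq hq1 hab ⟨m + 1, hn, rfl⟩) (hle _ ⟨m, hm, ?_⟩)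
      field_simp
      ring
  exact add_nonneg hplus hminus

theorem mem_ray_succ (q e : ℝ) (n : ℕ) : e⁻¹ * q ^ (n + 1) ∈ ray q e := ⟨n + 1, by omega, rfl⟩

theorem ne_zero_of_mem_ray (hq : q ≠ 0) {e x : ℝ} (he : e ≠ 0) (hx : x ∈ ray q e) : x ≠ 0 := by
  obtain ⟨n, -, rfl⟩ := hx
  exact mul_ne_zero (inv_ne_zero he) (pow_ne_zero n hq)

theorem tendsto_ray (hq : 0 ≤ q) (hq1 : q < 1) (e : ℝ) :
    Tendsto (fun n : ℕ => e⁻¹ * q ^ (n + 1)) atTop (𝓝 0) := by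
  simpa using ((tendsto_pow_atTop_nhds_zero_of_lt_one hq hq1).comp
    (tendsto_add_atTop_nat 1)).const_mul e⁻¹

end BigQJacobi

namespace Polynomial

theorem eval_zero_nonneg_of_tendsto {p : ℝ[X]} {u : ℕ → ℝ} (hu : Tendsto u atTop (𝓝 0))
    (h : ∀ n, 0 ≤ p.eval (u n)) : 0 ≤ p.eval 0 :=
  ge_of_tendsto' ((p.continuous.tendsto 0).comp hu) h

theorem exists_eq_X_mul_of_eval_zero {p : ℝ[X]} (h : p.eval 0 = 0) : ∃ g, p = X * g :=
  X_dvd_iff.2 (by rwa [coeff_zero_eq_eval_zero])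

theorem exists_eq_C_add_X_sq_mul_of_le {f : ℝ[X]} {u v : ℕ → ℝ}
    (hu : Tendsto u atTop (𝓝 0)) (hv : Tendsto v atTop (𝓝 0))
    (hu0 : ∀ n, 0 < u n) (hv0 : ∀ n, v n < 0)
    (hfu : ∀ n, f.eval 0 ≤ f.eval (u n)) (hfv : ∀ n, f.eval 0 ≤ f.eval (v n)) :
    ∃ r : ℝ[X], f = C (f.eval 0) + X ^ 2 * r ∧ 0 ≤ r.eval 0 := by
  obtain ⟨g, hg⟩ := exists_eq_X_mul_of_eval_zero (p := f - C (f.eval 0)) (by simp)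
  have hgeval : ∀ y, f.eval y - f.eval 0 = y * g.eval y := fun y => by
    simpa using congrArg (eval y) hg
  have hg_nonneg : 0 ≤ g.eval 0 := eval_zero_nonneg_of_tendsto hu fun n =>
    nonneg_of_mul_nonneg_right (by rw [← hgeval]; exact sub_nonneg.2 (hfu n)) (hu0 n)
  have hg_nonpos : g.eval 0 ≤ 0 := by
    simpa using eval_zero_nonneg_of_tendsto (p := -g) hv fun n => by
      simpa using nonpos_of_mul_nonneg_right (by rw [← hgeval]; exact sub_nonneg.2 (hfv n)) (hv0 n)
  obtain ⟨r, rfl⟩ := exists_eq_X_mul_of_eval_zero (le_antisymm hg_nonpos hg_nonneg)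
  refine ⟨r, by rw [← sub_eq_iff_eq_add', hg]; ring, eval_zero_nonneg_of_tendsto hu fun n => ?_⟩
  have hsq : 0 ≤ u n ^ 2 * r.eval (u n) := by
    have := hgeval (u n)
    simp only [eval_mul, eval_X] at this
    nlinarith [hfu n]
  exact nonneg_of_mul_nonneg_right hsq (by positivity [hu0 n])

end Polynomial

namespace BigQJacobi

variable {q a b : ℝ} {c : ℂ}

/-- On `f = f₀ + x² r` the `1/x`-singularities of `σ±` are absorbed by the factor `x²`. -/
theorem op_const_add_sq_mul {f₀ x : ℝ} (hq : q ≠ 0) (hx : x ≠ 0) (r : ℝ → ℝ) :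
    op q a b c (fun y => f₀ + y ^ 2 * r y) x =
      -(q / (a * b)) * Complex.normSq (c * x - 1) * (q ^ 2 * r (q * x) - r x)
        + -(q ^ 2 / (a * b)) * ((a * x / q - 1) * (b * x / q - 1)) * (r (x / q) / q ^ 2 - r x) := by
  have hnorm : Complex.normSq (c * x - 1) = Complex.normSq (c - x⁻¹) * x ^ 2 := by
    have hcx : c * x - 1 = (c - (x⁻¹ : ℝ)) * x := by
      push_cast
      rw [sub_mul, inv_mul_cancel₀ (by exact_mod_cast hx)]
    rw [hcx, Complex.normSq_mul, Complex.normSq_ofReal, sq]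
  simp only [op, sigmaPlus, sigmaMinus, hnorm]
  field_simp
  ring

theorem eval_zero_of_eq_op (hq : q ≠ 0) (ha : a ≠ 0) (hb : b ≠ 0) {Df r : ℝ[X]} {f₀ : ℝ}
    (hD : ∀ x ≠ 0, Df.eval x = op q a b c (fun y => f₀ + y ^ 2 * r.eval y) x) :
    Df.eval 0 = (1 - q) * (1 - q ^ 2) / (-(a * b)) * r.eval 0 := by
  have hext := Continuous.ext_on (dense_compl_singleton 0) Df.continuous
    (by fun_prop : Continuous fun x : ℝ =>
      -(q / (a * b)) * Complex.normSq (c * x - 1) * (q ^ 2 * r.eval (q * x) - r.eval x)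
        + -(q ^ 2 / (a * b)) * ((a * x / q - 1) * (b * x / q - 1)) * (r.eval (x / q) / q ^ 2 - r.eval x))
    fun x hx => (hD x hx).trans (op_const_add_sq_mul hq hx _)
  rw [congrFun hext 0]
  simp only [Complex.ofReal_zero, mul_zero, zero_sub, Complex.normSq_neg, map_one, zero_div]
  field_simp
  ring

theorem eval_zero_nonneg (hq : 0 < q) (hq1 : q < 1) (hb : b < 0) (ha : 0 < a) {Df f : ℝ[X]}
    (hD : ∀ x ≠ 0, Df.eval x = op q a b c f.eval x)
    (hmin : ∀ y ∈ ray q a ∪ ray q b, f.eval 0 ≤ f.eval y) : 0 ≤ Df.eval 0 := by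
  obtain ⟨r, hfr, hr⟩ := exists_eq_C_add_X_sq_mul_of_le (tendsto_ray hq.le hq1 a)
    (tendsto_ray hq.le hq1 b) (fun n => by positivity)
    (fun n => mul_neg_of_neg_of_pos (inv_lt_zero.2 hb) (pow_pos hq _))
    (fun n => hmin _ (.inl (mem_ray_succ q a n))) (fun n => hmin _ (.inr (mem_ray_succ q b n)))
  rw [hfr] at hD
  rw [eval_zero_of_eq_op hq.ne' ha.ne' hb.ne fun x hx => by simpa using hD x hx]
  have hab : 0 < -(a * b) := neg_pos.2 (mul_neg_of_pos_of_neg ha hb)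
  have hq2 : 0 ≤ 1 - q ^ 2 := by nlinarith
  exact mul_nonneg (div_nonneg (mul_nonneg (by linarith) hq2) hab.le) hr

end BigQJacobi

open BigQJacobi in
theorem bigQJacobi_positive_maximum_principle_general
    (q a b : ℝ) (c d : ℂ)
    (hq : 0 < q) (hq1 : q < 1) (hb : b < 0) (ha : 0 < a)
    (hd : d = starRingEnd ℂ c)
    (f Df : Polynomial ℝ)
    (hDf : ∀ x : ℝ, x ≠ 0 →
      (((Df.eval x : ℝ)) : ℂ)
        = (-((q : ℂ)/((a : ℂ)*(b : ℂ))) * (c - (x : ℂ)⁻¹) * (d - (x : ℂ)⁻¹))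
            * ((f.eval (q * x) : ℝ) - (f.eval x : ℝ))
          + (-((q : ℂ)^2/((a : ℂ)*(b : ℂ))) * ((a : ℂ)/(q : ℂ) - (x : ℂ)⁻¹)
              * ((b : ℂ)/(q : ℂ) - (x : ℂ)⁻¹))
            * ((f.eval (x / q) : ℝ) - (f.eval x : ℝ)))
    (Itil : Set ℝ)
    (hItil : Itil = {0} ∪ {x | ∃ n : ℕ, 1 ≤ n ∧ x = b⁻¹ * q ^ n}
                        ∪ {x | ∃ n : ℕ, 1 ≤ n ∧ x = a⁻¹ * q ^ n})
    (xt : ℝ) (hxt : xt ∈ Itil) (hmin : ∀ y ∈ Itil, f.eval xt ≤ f.eval y) :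
    0 ≤ Df.eval xt := by
  subst hd hItil
  have hD : ∀ x ≠ 0, Df.eval x = op q a b c f.eval x := fun x hx =>
    Complex.ofReal_injective ((hDf x hx).trans (ofReal_op f.eval x).symm)
  have hab : a * b < 0 := mul_neg_of_pos_of_neg ha hb
  rcases hxt with (rfl | hxb) | hxa
  · exact eval_zero_nonneg hq hq1 hb ha hD fun y hy =>
      hmin y (hy.elim (fun h => .inr h) fun h => .inl (.inr h))
  · rw [hD _ (ne_zero_of_mem_ray hq.ne' hb.ne hxb), op_swap]
    exact op_nonneg_of_isMinOn_ray hq hq1.le (mul_comm a b ▸ hab) (fun y hy => .inl (.inr hy)) hxb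
      (isMinOn_iff.2 hmin)
  · rw [hD _ (ne_zero_of_mem_ray hq.ne' ha.ne' hxa)]
    exact op_nonneg_of_isMinOn_ray hq hq1.le hab (fun y hy => .inr hy) hxa (isMinOn_iff.2 hmin)

/-- Positive maximum principle for the univariate big q-Jacobi operator `D` on the
compactified q-lattice `Ĩ = {b⁻¹qⁿ : n ≥ 1} ∪ {0} ∪ {a⁻¹qⁿ : n ≥ 1}`: if a real
polynomial `f` attains its minimum over `Ĩ` at `x̃ ∈ Ĩ`, then `(Df)(x̃) ≥ 0`. -/
theorem bigQJacobi_positive_maximum_principle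
    (q a b : ℝ) (c d : ℂ)
    (hq : 0 < q) (hq1 : q < 1) (hb : b < 0) (ha : 0 < a)
    (hd : d = starRingEnd ℂ c) (hc : c.im ≠ 0)
    (f Df : Polynomial ℝ)
    (hDf : ∀ x : ℝ, x ≠ 0 →
      (((Df.eval x : ℝ)) : ℂ)
        = (-((q : ℂ)/((a : ℂ)*(b : ℂ))) * (c - (x : ℂ)⁻¹) * (d - (x : ℂ)⁻¹))
            * ((f.eval (q * x) : ℝ) - (f.eval x : ℝ))
          + (-((q : ℂ)^2/((a : ℂ)*(b : ℂ))) * ((a : ℂ)/(q : ℂ) - (x : ℂ)⁻¹)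
              * ((b : ℂ)/(q : ℂ) - (x : ℂ)⁻¹))
            * ((f.eval (x / q) : ℝ) - (f.eval x : ℝ)))
    (Itil : Set ℝ)
    (hItil : Itil = {0} ∪ {x | ∃ n : ℕ, 1 ≤ n ∧ x = b⁻¹ * q ^ n}
                        ∪ {x | ∃ n : ℕ, 1 ≤ n ∧ x = a⁻¹ * q ^ n})
    (xt : ℝ) (hxt : xt ∈ Itil) (hmin : ∀ y ∈ Itil, f.eval xt ≤ f.eval y) :
    0 ≤ Df.eval xt :=
  bigQJacobi_positive_maximum_principle_general q a b c d hq hq1 hb ha hd f Df hDf Itil hItil xt hxt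
    hmin
end

section
/- Fix N ≥ 2, 0 < q,t < 1, b<0<a, c=conj(d) ∉ ℝ. Let D_N be the operator D_N = Σ_{i=1}^N [ (S⁺_{t,i} V_N / V_N) σ⁺_N(x_i)(S⁺_{q,i} - 1) + (S⁻_{t,i} V_N / V_N) σ⁻_N(x_i)(S⁻_{q,i} - 1) ], where σ^±_N(x) = t^{N-1} σ^±(x), V_N = ∏_{i<j}(x_i - x_j), and S^±_{q,i}, S^±_{t,i} multiply the i-th variable by q^{±1}, t^{±1}. Then the constant term of D_N p_{2,N}, where p_{2,N} = Σ x_i², equals C_N(q,t)(1+q)(t^{1-N} q^{-1} - 1) with C_N(q,t) = (q t^{N-1}/(a|b|))(1-q)(1-t^N)/(1-t); in particular it is strictly positive. -/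
/-!
Replacing `x_i` by `u x_i` multiplies `V_N` by `∏_{j ≠ i} (u x_i - x_j) / (x_i - x_j)`, and since
`c d = |d|²` and `c + d = 2 Re d`, `σ^±_N(x)(q^{±2} - 1) x²` is a real quadratic `α x² + β x + γ`.
Hence `D_N p_{2,N}` is a sum, over `u = t` and `u = t⁻¹`, of
`S = Σ_i ∏_{j ≠ i} (u x_i - x_j) / (x_i - x_j) · (α x_i² + β x_i + γ)`.
Now `γ + (u - 1) S` is the Lagrange sum `Σ_y f(y) / ∏_{y' ≠ y} (y - y')` over the nodes
`0, x_1, …, x_N` of `f = (α X² + β X + γ) ∏_j (u X - x_j)`, that is, the coefficient of `X^N` in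
`f mod X ∏_j (X - x_j)`. As `deg f = N + 2`, it is a polynomial in `e_1, e_2` with constant term
`γ u^N`, so `S` has constant term `γ (1 + u + ⋯ + u^{N-1})`.
-/

open Finset

/-- Vandermonde product `∏_{i<j} (x_i - x_j)`. -/
noncomputable def bqjVandermonde (N : ℕ) (x : Fin N → ℂ) : ℂ :=
  ∏ i : Fin N, ∏ j ∈ Finset.Ioi i, (x i - x j)

/-- `σ⁺_N(x) = -(q t^{N-1}/(ab)) (c - 1/x)(d - 1/x)`. -/
noncomputable def bqjSigmaPlusN (N : ℕ) (q t a b : ℝ) (c d : ℂ) (x : ℂ) : ℂ :=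
  (t : ℂ) ^ ((N : ℤ) - 1) * (-((q : ℂ)/((a : ℂ)*(b : ℂ))) * (c - x⁻¹) * (d - x⁻¹))

/-- `σ⁻_N(x) = -(q² t^{N-1}/(ab)) (a/q - 1/x)(b/q - 1/x)`. -/
noncomputable def bqjSigmaMinusN (N : ℕ) (q t a b : ℝ) (x : ℂ) : ℂ :=
  (t : ℂ) ^ ((N : ℤ) - 1) *
    (-((q : ℂ)^2/((a : ℂ)*(b : ℂ))) * ((a : ℂ)/(q : ℂ) - x⁻¹) * ((b : ℂ)/(q : ℂ) - x⁻¹))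

/-- The `N`-variable big q-Jacobi q-difference operator `D_N`, applied to a function
`f` of `N` complex variables, at the point `x`. -/
noncomputable def bqjDN (N : ℕ) (q t a b : ℝ) (c d : ℂ)
    (f : (Fin N → ℂ) → ℂ) (x : Fin N → ℂ) : ℂ :=
  ∑ i : Fin N,
    (bqjVandermonde N (Function.update x i ((t : ℂ) * x i)) / bqjVandermonde N x
        * bqjSigmaPlusN N q t a b c d (x i)
        * (f (Function.update x i ((q : ℂ) * x i)) - f x)
      + bqjVandermonde N (Function.update x i ((t : ℂ)⁻¹ * x i)) / bqjVandermonde N x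
        * bqjSigmaMinusN N q t a b (x i)
        * (f (Function.update x i ((q : ℂ)⁻¹ * x i)) - f x))

namespace Lagrange

open Polynomial

theorem coeff_nodal {R ι : Type*} [CommRing R] {s : Finset ι} {v : ι → R} {k : ℕ} (hk : k ≤ #s) :
    (nodal s v).coeff k = (-1) ^ (#s - k) * (s.val.map v).esymm (#s - k) := by
  have : nodal s v = ((s.val.map v).map fun t => X - C t).prod := by
    rw [nodal_eq, prod_eq_multiset_prod, Multiset.map_map]; rfl
  rw [this, Multiset.prod_X_sub_C_coeff _ (by simpa using hk), Multiset.card_map, card_val]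

variable {F : Type*} [Field F] {ι : Type*} [DecidableEq ι] {s : Finset ι} {v : ι → F}

/-- The remainder of `f` modulo `nodal s v` has quotient `q₁ X + q₀`, read off from the two top
coefficients of `f`, and `Lagrange.coeff_eq_sum` applies to it. -/
theorem sum_eval_div_prod_sub_of_natDegree_le (hvs : Set.InjOn v s) {n : ℕ} (hs : #s = n + 2)
    {f : F[X]} (hf : f.natDegree ≤ n + 3) :
    ∑ i ∈ s, f.eval (v i) / ∏ j ∈ s.erase i, (v i - v j)
      = f.coeff (n + 1) - f.coeff (n + 2) * (nodal s v).coeff (n + 1)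
        + f.coeff (n + 3) * ((nodal s v).coeff (n + 1) ^ 2 - (nodal s v).coeff n) := by
  set W := nodal s v
  have hW : W.natDegree = n + 2 := by rw [natDegree_nodal, hs]
  have hWtop : W.coeff (n + 2) = 1 := hW ▸ (nodal_monic (s := s) (v := v)).coeff_natDegree
  set q₁ := f.coeff (n + 3)
  set q₀ := f.coeff (n + 2) - q₁ * W.coeff (n + 1)
  set R := f - C q₁ * (X * W) - C q₀ * W with hR
  have hRcoeff : ∀ k, R.coeff (k + 1)
      = f.coeff (k + 1) - q₁ * W.coeff k - q₀ * W.coeff (k + 1) := by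
    intro k
    simp only [hR, coeff_sub, coeff_C_mul, coeff_X_mul]
  have hRdeg : R.degree < #s := by
    rw [hs, degree_lt_iff_coeff_zero]
    intro k hk
    obtain ⟨k, rfl⟩ : ∃ j, k = j + 1 := ⟨k - 1, by omega⟩
    rw [hRcoeff]
    rcases (show k = n + 1 ∨ k = n + 2 ∨ n + 3 ≤ k by omega) with rfl | rfl | hk
    · rw [hWtop]; ring
    · rw [hWtop, coeff_eq_zero_of_natDegree_lt (p := W) (by omega)]; ring
    · rw [coeff_eq_zero_of_natDegree_lt (p := f) (by omega),
        coeff_eq_zero_of_natDegree_lt (p := W) (by omega),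
        coeff_eq_zero_of_natDegree_lt (p := W) (by omega)]
      ring
  have heval : ∀ i ∈ s, f.eval (v i) = R.eval (v i) := by
    intro i hi
    simp [hR, eval_nodal_at_node hi, W]
  rw [sum_congr rfl fun i hi => by rw [heval i hi], ← coeff_eq_sum hvs hRdeg, hs]
  show R.coeff (n + 1) = _
  rw [hRcoeff]
  ring

theorem sum_insert_div_prod_sub {a : ι} (ha : a ∉ s) (r : ι → F) :
    ∑ i ∈ insert a s, r i / ∏ j ∈ (insert a s).erase i, (v i - v j)
      = r a / ∏ j ∈ s, (v a - v j)
        + ∑ i ∈ s, r i / ((v i - v a) * ∏ j ∈ s.erase i, (v i - v j)) := by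
  rw [sum_insert ha, erase_insert ha]
  congr 1
  refine sum_congr rfl fun i hi => ?_
  rw [erase_insert_of_ne (ne_of_mem_of_not_mem hi ha).symm,
    prod_insert fun h => ha (mem_of_mem_erase h)]

end Lagrange

section Interpolation

open Polynomial Lagrange

theorem coeff_quadratic_mul {R : Type*} [Semiring R] (p : R[X]) (α β γ : R) (k : ℕ) :
    ((C α * X ^ 2 + C β * X + C γ) * p).coeff (k + 2)
      = α * p.coeff k + β * p.coeff (k + 1) + γ * p.coeff (k + 2) := by
  simp only [add_mul, mul_assoc, coeff_add, coeff_C_mul, coeff_X_pow_mul, coeff_X_mul]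

variable {F : Type*} [Field F] {ι : Type*} [Fintype ι] [DecidableEq ι]

theorem sum_div_prod_sub_option_elim (x : ι → F) (r : Option ι → F) :
    ∑ o, r o / ∏ o' ∈ univ.erase o, (o.elim 0 x - o'.elim 0 x)
      = r none / ∏ j, -x j + ∑ i, r (some i) / (x i * ∏ j ∈ univ.erase i, (x i - x j)) := by
  have huniv : (univ : Finset (Option ι)) = insert none (univ.map Function.Embedding.some) := by
    ext o; cases o <;> simp
  rw [huniv, sum_insert_div_prod_sub (by simp), sum_map, prod_map]
  simp_rw [← map_erase, prod_map]
  simp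

/-- The nodes `0, x₁, …, xₙ` turn the factor `1 / x_i` coming from
`∏_{j ≠ i} (u x_i - x_j) = (∏_j (u x_i - x_j)) / ((u - 1) x_i)` into a Lagrange weight. -/
theorem sum_option_eval_quadratic_mul_nodal_comp {x : ι → F} (hx : Function.Injective x)
    (hx0 : ∀ i, x i ≠ 0) (u α β γ : F) :
    ∑ o : Option ι,
        ((C α * X ^ 2 + C β * X + C γ) * (nodal univ x).comp (C u * X)).eval (o.elim 0 x)
          / ∏ o' ∈ univ.erase o, (o.elim 0 x - o'.elim 0 x)
      = γ + (u - 1) * ∑ i, (∏ j ∈ univ.erase i, (u * x i - x j))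
          / (∏ j ∈ univ.erase i, (x i - x j)) * (α * x i ^ 2 + β * x i + γ) := by
  have hf : ∀ y, ((C α * X ^ 2 + C β * X + C γ) * (nodal univ x).comp (C u * X)).eval y
      = (α * y ^ 2 + β * y + γ) * ∏ j, (u * y - x j) := by
    intro y; simp [eval_nodal]
  have hM0 : ∏ j, -x j ≠ 0 := prod_ne_zero_iff.mpr fun j _ => neg_ne_zero.mpr (hx0 j)
  have hprod : ∀ i, ∏ j ∈ univ.erase i, (x i - x j) ≠ 0 := fun i =>
    prod_ne_zero_iff.mpr fun j hj => sub_ne_zero.mpr fun h => (ne_of_mem_erase hj) (hx h).symm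
  rw [sum_div_prod_sub_option_elim, mul_sum]
  congr 1
  · simpa [hf] using mul_div_cancel_right₀ γ hM0
  · refine sum_congr rfl fun i _ => ?_
    simp only [Option.elim, hf, ← mul_prod_erase univ _ (mem_univ i)]
    field_simp [hx0 i, hprod i]

theorem sum_prod_div_prod_mul_quadratic {m : ℕ} (hcard : Fintype.card ι = m + 2) {x : ι → F}
    (hx : Function.Injective x) (hx0 : ∀ i, x i ≠ 0) {u : F} (hu : u ≠ 1) (α β γ : F) :
    ∑ i, (∏ j ∈ univ.erase i, (u * x i - x j)) / (∏ j ∈ univ.erase i, (x i - x j))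
        * (α * x i ^ 2 + β * x i + γ)
      = α * (u ^ (m + 1) * (univ.val.map x).esymm 1 ^ 2
          - u ^ m * (u + 1) * (univ.val.map x).esymm 2)
        + β * u ^ (m + 1) * (univ.val.map x).esymm 1 + γ * ∑ k ∈ range (m + 2), u ^ k := by
  set M := nodal univ x
  have hcardM : #(univ : Finset ι) = m + 2 := hcard
  have hM : ∀ k, m + 2 < k → M.coeff k = 0 := fun k hk =>
    coeff_eq_zero_of_natDegree_lt (by rwa [natDegree_nodal, hcardM])
  have hMtop : M.coeff (m + 2) = 1 := by
    simpa [natDegree_nodal, hcardM] using (nodal_monic (s := univ) (v := x)).coeff_natDegree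
  have hM1 : M.coeff (m + 1) = -(univ.val.map x).esymm 1 := by
    simp [M, coeff_nodal, hcardM, show m + 2 - (m + 1) = 1 by omega]
  have hM2 : M.coeff m = (univ.val.map x).esymm 2 := by
    simp [M, coeff_nodal, hcardM]
  set v : Option ι → F := fun o => o.elim 0 x
  have hv : Set.InjOn v (univ : Finset (Option ι)) := by
    rintro (_ | i) - (_ | j) - h <;> simp_all [v, eq_comm, hx.eq_iff]
  have hW : nodal univ v = X * M := by
    simp only [nodal_eq, Fintype.prod_option, v, Option.elim, map_zero, sub_zero, M]
  have hdeg : ((C α * X ^ 2 + C β * X + C γ) * M.comp (C u * X)).natDegree ≤ m + 1 + 3 :=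
    calc _ ≤ 2 + M.natDegree * (C u * X).natDegree :=
          natDegree_mul_le.trans (add_le_add natDegree_quadratic_le natDegree_comp_le)
      _ ≤ 2 + (m + 2) * 1 := by
          rw [natDegree_nodal, hcardM]
          gcongr
          exact (natDegree_C_mul_le u X).trans natDegree_X_le
      _ = m + 1 + 3 := by ring
  have hcoeff := sum_eval_div_prod_sub_of_natDegree_le hv (by simpa using hcard) hdeg
  rw [sum_option_eval_quadratic_mul_nodal_comp hx hx0, hW, coeff_X_mul, coeff_X_mul,
    show m + 1 + 1 = m + 2 from rfl, show m + 1 + 3 = m + 2 + 2 from rfl, coeff_quadratic_mul,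
    coeff_quadratic_mul, coeff_quadratic_mul] at hcoeff
  simp only [comp_C_mul_X_coeff, hM1, hM2, hMtop, hM (m + 3) (by omega),
    hM (m + 4) (by omega)] at hcoeff
  apply mul_left_cancel₀ (sub_ne_zero.mpr hu)
  linear_combination hcoeff - γ * geom_sum_mul u (m + 2)

end Interpolation

section SymmQuadratic

open MvPolynomial

variable (σ : Type*) [Fintype σ]

/-- The symmetric polynomial that `sum_prod_div_prod_mul_quadratic` evaluates to when
`Fintype.card σ = m + 2`. -/
noncomputable def symmQuadratic (m : ℕ) (u α β γ : ℝ) : MvPolynomial σ ℝ :=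
  C α * (C (u ^ (m + 1)) * esymm σ ℝ 1 ^ 2 - C (u ^ m * (u + 1)) * esymm σ ℝ 2)
    + C (β * u ^ (m + 1)) * esymm σ ℝ 1 + C (γ * ∑ k ∈ range (m + 2), u ^ k)

variable {σ}

theorem coeff_zero_symmQuadratic (m : ℕ) (u α β γ : ℝ) :
    coeff 0 (symmQuadratic σ m u α β γ) = γ * ∑ k ∈ range (m + 2), u ^ k := by
  have hesymm : ∀ n ≠ 0, constantCoeff (esymm σ ℝ n) = 0 := fun n hn => by
    simp only [esymm, map_sum, map_prod, constantCoeff_X]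
    exact sum_eq_zero fun s hs => by rw [prod_const, (mem_powersetCard.mp hs).2, zero_pow hn]
  rw [← constantCoeff_eq, symmQuadratic]
  simp [hesymm]

theorem ofReal_eval_symmQuadratic (x : σ → ℝ) (m : ℕ) (u α β γ : ℝ) :
    ((eval x (symmQuadratic σ m u α β γ) : ℝ) : ℂ)
      = α * (u ^ (m + 1) * (univ.val.map fun i => (x i : ℂ)).esymm 1 ^ 2
          - u ^ m * (u + 1) * (univ.val.map fun i => (x i : ℂ)).esymm 2)
        + β * u ^ (m + 1) * (univ.val.map fun i => (x i : ℂ)).esymm 1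
        + γ * ∑ k ∈ range (m + 2), (u : ℂ) ^ k := by
  simp [symmQuadratic, esymm, esymm_map_val]

end SymmQuadratic

section Vandermonde

open Function

theorem exists_bqjVandermonde_update_eq {N : ℕ} (x : Fin N → ℂ) (i : Fin N) :
    ∃ B : ℂ, ∀ y, bqjVandermonde N (update x i y) = (∏ j ∈ univ.erase i, (y - x j)) * B := by
  -- the factors without `x i`, and the sign of reversing `x a - x i` for `a < i`
  refine ⟨(-1) ^ #(Iio i) * ∏ a ∈ univ.erase i, ∏ b ∈ (Ioi a).erase i, (x a - x b), fun y => ?_⟩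
  have hrow : ∏ b ∈ Ioi i, (update x i y i - update x i y b) = ∏ b ∈ Ioi i, (y - x b) :=
    prod_congr rfl fun b hb => by rw [update_self, update_of_ne (mem_Ioi.mp hb).ne']
  have hcol : ∀ a ∈ univ.erase i, ∏ b ∈ Ioi a, (update x i y a - update x i y b)
      = (if a < i then x a - y else 1) * ∏ b ∈ (Ioi a).erase i, (x a - x b) := by
    intro a ha
    have hai := ne_of_mem_erase ha
    split_ifs with h
    · rw [← mul_prod_erase _ _ (mem_Ioi.mpr h), update_self, update_of_ne hai]
      exact congrArg _ (prod_congr rfl fun b hb => by rw [update_of_ne (ne_of_mem_erase hb)])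
    · rw [one_mul, erase_eq_of_notMem (by simpa using h)]
      exact prod_congr rfl fun b hb => by
        rw [update_of_ne hai, update_of_ne (by rintro rfl; exact h (mem_Ioi.mp hb))]
  have hlt : ∏ a ∈ univ.erase i, (if a < i then x a - y else 1) = ∏ a ∈ Iio i, (x a - y) := by
    rw [prod_ite, prod_const_one, mul_one]
    congr 1; ext a; simpa using ne_of_lt
  have hsplit :
      ∏ j ∈ univ.erase i, (y - x j) = (∏ b ∈ Ioi i, (y - x b)) * ∏ a ∈ Iio i, (y - x a) := by
    rw [← compl_singleton, ← Ioi_disjUnion_Iio, prod_disjUnion]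
  have hneg : ∏ a ∈ Iio i, (x a - y) = (-1) ^ #(Iio i) * ∏ a ∈ Iio i, (y - x a) := by
    rw [← prod_neg]; simp_rw [neg_sub]
  unfold bqjVandermonde
  rw [← mul_prod_erase univ _ (mem_univ i), hrow, prod_congr rfl hcol, prod_mul_distrib, hlt,
    hsplit, hneg]
  ring

theorem bqjVandermonde_update_div {N : ℕ} {x : Fin N → ℂ} (hx : Injective x) (i : Fin N) (y : ℂ) :
    bqjVandermonde N (update x i y) / bqjVandermonde N x
      = (∏ j ∈ univ.erase i, (y - x j)) / ∏ j ∈ univ.erase i, (x i - x j) := by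
  obtain ⟨B, hB⟩ := exists_bqjVandermonde_update_eq x i
  have hV : bqjVandermonde N x = (∏ j ∈ univ.erase i, (x i - x j)) * B := by
    simpa using hB (x i)
  have hV0 : bqjVandermonde N x ≠ 0 :=
    prod_ne_zero_iff.mpr fun a _ => prod_ne_zero_iff.mpr fun b hb =>
      sub_ne_zero.mpr (hx.ne (mem_Ioi.mp hb).ne)
  rw [hB, hV, mul_div_mul_right _ _ (right_ne_zero_of_mul (hV ▸ hV0))]

theorem sum_sq_update_sub {ι R : Type*} [Fintype ι] [DecidableEq ι] [CommRing R] (z : ι → R)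
    (i : ι) (y : R) : ∑ j, update z i y j ^ 2 - ∑ j, z j ^ 2 = y ^ 2 - z i ^ 2 := by
  rw [← sum_sub_distrib, sum_eq_single i (fun j _ hj => by simp [update_of_ne hj]) (by simp),
    update_self]

end Vandermonde

section Operator

open Function

-- `σ^±_N(x) (q^{±2} - 1) x²` is `κ^±` times a quadratic in `x` with constant term `1`.
noncomputable def bqjKappaPlus (N : ℕ) (q t a b : ℝ) : ℝ :=
  t ^ ((N : ℤ) - 1) * (-(q / (a * b))) * (q ^ 2 - 1)

noncomputable def bqjKappaMinus (N : ℕ) (q t a b : ℝ) : ℝ :=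
  t ^ ((N : ℤ) - 1) * (-(q ^ 2 / (a * b))) * (q⁻¹ ^ 2 - 1)

variable {N : ℕ} {q t a b : ℝ} {c d : ℂ}

theorem bqjSigmaPlusN_mul (hcd : c = starRingEnd ℂ d) {z : ℂ} (hz : z ≠ 0) :
    bqjSigmaPlusN N q t a b c d z * ((q * z) ^ 2 - z ^ 2)
      = ((bqjKappaPlus N q t a b * Complex.normSq d : ℝ) : ℂ) * z ^ 2
        + ((-(bqjKappaPlus N q t a b * (2 * d.re)) : ℝ) : ℂ) * z
        + (bqjKappaPlus N q t a b : ℂ) := by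
  have hnorm : c * d = Complex.normSq d := by rw [hcd, mul_comm, Complex.mul_conj]
  have hre : c + d = 2 * d.re := by rw [hcd, add_comm, Complex.add_conj]; push_cast; ring
  unfold bqjSigmaPlusN bqjKappaPlus
  push_cast
  rw [← hnorm, ← hre]
  field_simp
  ring

theorem bqjSigmaMinusN_mul (hq : q ≠ 0) {z : ℂ} (hz : z ≠ 0) :
    bqjSigmaMinusN N q t a b z * (((q : ℂ)⁻¹ * z) ^ 2 - z ^ 2)
      = ((bqjKappaMinus N q t a b * (a * b / q ^ 2) : ℝ) : ℂ) * z ^ 2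
        + ((-(bqjKappaMinus N q t a b * ((a + b) / q)) : ℝ) : ℂ) * z
        + (bqjKappaMinus N q t a b : ℂ) := by
  have : (q : ℂ) ≠ 0 := by exact_mod_cast hq
  unfold bqjSigmaMinusN bqjKappaMinus
  push_cast
  field_simp
  ring

theorem bqjDN_sum_sq {α₁ β₁ γ₁ α₂ β₂ γ₂ : ℂ}
    (h₁ : ∀ w ≠ 0, bqjSigmaPlusN N q t a b c d w * ((q * w) ^ 2 - w ^ 2)
      = α₁ * w ^ 2 + β₁ * w + γ₁)
    (h₂ : ∀ w ≠ 0, bqjSigmaMinusN N q t a b w * (((q : ℂ)⁻¹ * w) ^ 2 - w ^ 2)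
      = α₂ * w ^ 2 + β₂ * w + γ₂)
    {z : Fin N → ℂ} (hz : Injective z) (hz0 : ∀ i, z i ≠ 0) :
    bqjDN N q t a b c d (fun w => ∑ i, w i ^ 2) z
      = ∑ i, ((∏ j ∈ univ.erase i, (t * z i - z j)) / (∏ j ∈ univ.erase i, (z i - z j))
            * (α₁ * z i ^ 2 + β₁ * z i + γ₁)
          + (∏ j ∈ univ.erase i, ((t : ℂ)⁻¹ * z i - z j)) / (∏ j ∈ univ.erase i, (z i - z j))
            * (α₂ * z i ^ 2 + β₂ * z i + γ₂)) := by
  refine sum_congr rfl fun i _ => ?_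
  rw [bqjVandermonde_update_div hz, bqjVandermonde_update_div hz, sum_sq_update_sub,
    sum_sq_update_sub, mul_assoc, h₁ _ (hz0 i), mul_assoc, h₂ _ (hz0 i)]

end Operator

section ConstantTerm

variable {N : ℕ} {q t a b : ℝ}

theorem bqjKappa_mul_geom_sum (hq : q ≠ 0) (ht : t ≠ 0) (ht1 : t ≠ 1) (hb : b < 0) :
    bqjKappaPlus N q t a b * ∑ k ∈ range N, t ^ k
        + bqjKappaMinus N q t a b * ∑ k ∈ range N, t⁻¹ ^ k
      = (q * t ^ ((N : ℤ) - 1) / (a * |b|) * (1 - q) * (1 - t ^ N) / (1 - t))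
          * (1 + q) * (t ^ ((1 : ℤ) - N) * q⁻¹ - 1) := by
  have ht1' : t⁻¹ ≠ 1 := inv_ne_one.mpr ht1
  unfold bqjKappaPlus bqjKappaMinus
  rw [geom_sum_eq ht1, geom_sum_eq ht1', abs_of_neg hb]
  simp only [zpow_sub₀ ht, zpow_one, zpow_natCast, inv_pow]
  field_simp
  ring

theorem bqj_constant_term_pos (hN : 1 ≤ N) (hq : 0 < q) (hq1 : q < 1) (ht : 0 < t) (ht1 : t < 1)
    (ha : 0 < a) (hb : b < 0) :
    0 < (q * t ^ ((N : ℤ) - 1) / (a * |b|) * (1 - q) * (1 - t ^ N) / (1 - t))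
          * (1 + q) * (t ^ ((1 : ℤ) - N) * q⁻¹ - 1) := by
  have htN : t ^ N < 1 := pow_lt_one₀ ht.le ht1 (by omega)
  have hpow : 1 ≤ t ^ ((1 : ℤ) - N) := one_le_zpow_of_nonpos₀ ht ht1.le (by omega)
  have hqinv : 1 < q⁻¹ := (one_lt_inv₀ hq).mpr hq1
  have hb' : 0 < |b| := abs_pos.mpr hb.ne
  have : 1 < t ^ ((1 : ℤ) - N) * q⁻¹ := one_lt_mul_of_le_of_lt hpow hqinv
  have : 0 < 1 - q := by linarith
  have : 0 < 1 - t ^ N := by linarith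
  have : 0 < 1 - t := by linarith
  have : 0 < t ^ ((1 : ℤ) - N) * q⁻¹ - 1 := by linarith
  positivity

end ConstantTerm

theorem bqjDN_constant_term_p2_general
    (N : ℕ) (hN : 2 ≤ N) (q t a b : ℝ) (c d : ℂ)
    (hq : 0 < q) (hq1 : q < 1) (ht : 0 < t) (ht1 : t < 1)
    (hb : b < 0) (ha : 0 < a) (hcd : c = starRingEnd ℂ d) :
    ∃ P : MvPolynomial (Fin N) ℝ,
      (∀ x : Fin N → ℝ, (∀ i, x i ≠ 0) → (∀ i j, i ≠ j → x i ≠ x j) →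
        bqjDN N q t a b c d (fun z => ∑ i : Fin N, z i ^ 2) (fun i => (x i : ℂ))
          = ((MvPolynomial.eval x P : ℝ) : ℂ)) ∧
      MvPolynomial.coeff 0 P
        = (q * t ^ ((N : ℤ) - 1) / (a * |b|) * (1 - q) * (1 - t ^ N) / (1 - t))
            * (1 + q) * (t ^ ((1 : ℤ) - N) * q⁻¹ - 1) ∧
      0 < MvPolynomial.coeff 0 P := by
  obtain ⟨m, rfl⟩ : ∃ m, N = m + 2 := ⟨N - 2, by omega⟩
  set κp := bqjKappaPlus (m + 2) q t a b
  set κm := bqjKappaMinus (m + 2) q t a b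
  set P := symmQuadratic (Fin (m + 2)) m t (κp * Complex.normSq d) (-(κp * (2 * d.re))) κp
    + symmQuadratic (Fin (m + 2)) m t⁻¹ (κm * (a * b / q ^ 2)) (-(κm * ((a + b) / q))) κm
  have hcoeff : MvPolynomial.coeff 0 P
      = (q * t ^ (((m + 2 : ℕ) : ℤ) - 1) / (a * |b|) * (1 - q) * (1 - t ^ (m + 2)) / (1 - t))
          * (1 + q) * (t ^ ((1 : ℤ) - (m + 2 : ℕ)) * q⁻¹ - 1) := by
    rw [MvPolynomial.coeff_add, coeff_zero_symmQuadratic, coeff_zero_symmQuadratic]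
    exact bqjKappa_mul_geom_sum hq.ne' ht.ne' ht1.ne hb
  refine ⟨P, fun x hx0 hx => ?_, hcoeff,
    hcoeff ▸ bqj_constant_term_pos (by omega) hq hq1 ht ht1 ha hb⟩
  have hz : Function.Injective fun i => (x i : ℂ) := fun i j h =>
    by_contra fun hij => hx i j hij (Complex.ofReal_injective h)
  have hz0 : ∀ i, (x i : ℂ) ≠ 0 := by simpa using hx0
  have ht1' : (t : ℂ) ≠ 1 := by exact_mod_cast ht1.ne
  rw [bqjDN_sum_sq (fun w => bqjSigmaPlusN_mul hcd) (fun w => bqjSigmaMinusN_mul hq.ne') hz hz0,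
    sum_add_distrib, sum_prod_div_prod_mul_quadratic (Fintype.card_fin _) hz hz0 ht1',
    sum_prod_div_prod_mul_quadratic (Fintype.card_fin _) hz hz0 (inv_ne_one.mpr ht1'), map_add,
    Complex.ofReal_add, ofReal_eval_symmQuadratic, ofReal_eval_symmQuadratic]
  push_cast
  ring

/-- The constant term of `D_N p_{2,N}` equals
`C_N(q,t)(1+q)(t^{1-N}q⁻¹ - 1) > 0`, where
`C_N(q,t) = (q t^{N-1}/(a|b|))(1-q)(1-t^N)/(1-t)`. -/
theorem bqjDN_constant_term_p2
    (N : ℕ) (hN : 2 ≤ N) (q t a b : ℝ) (c d : ℂ)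
    (hq : 0 < q) (hq1 : q < 1) (ht : 0 < t) (ht1 : t < 1)
    (hb : b < 0) (ha : 0 < a) (hcd : c = starRingEnd ℂ d) (hc : c.im ≠ 0) :
    ∃ P : MvPolynomial (Fin N) ℝ,
      (∀ x : Fin N → ℝ, (∀ i, x i ≠ 0) → (∀ i j, i ≠ j → x i ≠ x j) →
        bqjDN N q t a b c d (fun z => ∑ i : Fin N, z i ^ 2) (fun i => (x i : ℂ))
          = ((MvPolynomial.eval x P : ℝ) : ℂ)) ∧
      MvPolynomial.coeff 0 P
        = (q * t ^ ((N : ℤ) - 1) / (a * |b|) * (1 - q) * (1 - t ^ N) / (1 - t))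
            * (1 + q) * (t ^ ((1 : ℤ) - N) * q⁻¹ - 1) ∧
      0 < MvPolynomial.coeff 0 P :=
  bqjDN_constant_term_p2_general N hN q t a b c d hq hq1 ht ht1 hb ha hcd
end

section
/- Let 0<q,t<1, N ≥ 2, a|b| > 0, and set A = C_N(q,t)(1+q)(t^{1-N}q^{-1} - 1) > 0 and B = -C_N(q,t)(t^{1-N}-1) < 0 where C_N(q,t) = (q t^{N-1}/(a|b|))(1-q)(1-t^N)/(1-t). Then for every real u with u ≤ (1+q)/√q one has A + uB ≥ 0. -/
/-! With `r = √q` and `s = t^{1-N} > 1`, the claim `A + uB ≥ 0` reduces, since `B < 0`, to the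
extreme value `u = (1+q)/r`; after dividing by `C (1+q) > 0` and clearing `r² = q` it becomes
`(1 - r)(s + r) ≥ 0`. -/

theorem sub_one_div_sqrt_le_mul_inv_sub_one {q s : ℝ} (hq : 0 < q) (hq1 : q ≤ 1) (hs : 0 ≤ s) :
    (s - 1) / Real.sqrt q ≤ s * q⁻¹ - 1 := by
  set r := Real.sqrt q
  have hr : 0 < r := Real.sqrt_pos.mpr hq
  have hr1 : r ≤ 1 := Real.sqrt_le_one.mpr hq1
  rw [← Real.sq_sqrt hq.le, div_le_iff₀ hr]
  field_simp
  nlinarith [mul_nonneg (sub_nonneg.mpr hr1) (add_nonneg hs hr.le)]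

theorem one_add_div_sqrt_mul_sub_one_le {q s : ℝ} (hq : 0 < q) (hq1 : q ≤ 1) (hs : 0 ≤ s) :
    (1 + q) / Real.sqrt q * (s - 1) ≤ (1 + q) * (s * q⁻¹ - 1) := by
  rw [div_mul_eq_mul_div, mul_div_assoc]
  exact mul_le_mul_of_nonneg_left (sub_one_div_sqrt_le_mul_inv_sub_one hq hq1 hs) (by linarith)

/-- With `A = C_N(q,t)(1+q)(t^{1-N}q⁻¹-1)` and `B = -C_N(q,t)(t^{1-N}-1)`, one has
`A > 0`, `B < 0`, and `A + uB ≥ 0` for every `u ≤ (1+q)/√q`. -/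
theorem bqj_A_plus_uB_nonneg
    (N : ℕ) (hN : 2 ≤ N) (q t a b : ℝ)
    (hq : 0 < q) (hq1 : q < 1) (ht : 0 < t) (ht1 : t < 1)
    (hb : b < 0) (ha : 0 < a) :
    let C : ℝ := q * t ^ ((N : ℤ) - 1) / (a * |b|) * (1 - q) * (1 - t ^ N) / (1 - t)
    let A : ℝ := C * (1 + q) * (t ^ ((1 : ℤ) - N) * q⁻¹ - 1)
    let B : ℝ := -C * (t ^ ((1 : ℤ) - N) - 1)
    0 < A ∧ B < 0 ∧ ∀ u : ℝ, u ≤ (1 + q) / Real.sqrt q → 0 ≤ A + u * B := by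
  intro C A B
  set s : ℝ := t ^ ((1 : ℤ) - N)
  have hs : 1 < s := one_lt_zpow_of_neg₀ ht ht1 (by omega)
  have hC : 0 < C := by
    have htN : t ^ N < 1 := pow_lt_one₀ ht.le ht1 (by omega)
    have hab : 0 < a * |b| := mul_pos ha (abs_pos.mpr hb.ne)
    exact div_pos (mul_pos (mul_pos (div_pos (mul_pos hq (zpow_pos ht _)) hab)
      (by linarith)) (by linarith)) (by linarith)
  have hsq : 1 < s * q⁻¹ := one_lt_mul_of_lt_of_le hs ((one_le_inv₀ hq).mpr hq1.le)
  have hA : 0 < A := mul_pos (mul_pos hC (by linarith)) (by linarith)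
  have hB : B < 0 := by
    simpa only [B, neg_mul, neg_lt_zero] using mul_pos hC (sub_pos.mpr hs)
  refine ⟨hA, hB, fun u hu => ?_⟩
  have hkey := one_add_div_sqrt_mul_sub_one_le hq hq1.le (zero_le_one.trans hs.le)
  calc 0 ≤ C * ((1 + q) * (s * q⁻¹ - 1) - (1 + q) / Real.sqrt q * (s - 1)) :=
        mul_nonneg hC.le (sub_nonneg.mpr hkey)
    _ = A + (1 + q) / Real.sqrt q * B := by ring
    _ ≤ A + u * B := add_le_add_right (mul_le_mul_of_nonpos_right hu hB.le) A
end

section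
/- Let 0 < t < 1 and let y₁ > y₂ > ... > y_N be real numbers such that any two consecutive nonzero y's of the same sign satisfy y_{i+1}/y_i ≤ t (and y_i may have different signs, positives first). Assume moreover y_{i+1} ≤ t y_i whenever y_i > 0 and y_{i-1} ≥ t^{-1} y_i whenever both are defined (i.e., in logarithmic scale the gaps are ≥ log(1/t)). Then for each i, the products ∏_{k<i}(y_k - t^{±1} y_i) · ∏_{l>i}(t^{±1} y_i - y_l) are nonnegative; equivalently, (S^±_{t,i} V_N)(Y)/V_N(Y) ≥ 0 where V_N(Y) = ∏_{j<k}(y_j - y_k) > 0. -/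
/-!
Along a decreasing sequence the gap conditions between neighbours propagate to all pairs:
`y l ≤ ε y i` for `l > i` and `ε y i ≤ y k` for `k < i`, for both `ε = t` and `ε = t⁻¹`.
Hence every factor of both products is nonnegative.
-/

open Finset

section GapConditions

variable {ι 𝕜 : Type*} [LinearOrder ι] {y : ι → 𝕜} {c : 𝕜}

theorem StrictAnti.prod_prod_Ioi_sub_pos [CommRing 𝕜] [PartialOrder 𝕜] [IsStrictOrderedRing 𝕜]
    [Fintype ι] [LocallyFiniteOrderTop ι] (hy : StrictAnti y) : 0 < ∏ i, ∏ j ∈ Ioi i, (y i - y j) :=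
  prod_pos fun _ _ ↦ prod_pos fun _ hj ↦ sub_pos.2 (hy (mem_Ioi.1 hj))

theorem Antitone.le_mul_of_lt [Preorder 𝕜] [Mul 𝕜] [IsStronglyAtomic ι] (hy : Antitone y)
    (hgap : ∀ i j, i ⋖ j → y j ≤ c * y i) {i l : ι} (hil : i < l) : y l ≤ c * y i := by
  obtain ⟨j, hij, hjl⟩ := exists_covBy_le_of_lt hil
  exact (hy hjl).trans (hgap i j hij)

theorem Antitone.mul_le_of_lt [Semifield 𝕜] [LinearOrder 𝕜] [IsStrictOrderedRing 𝕜]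
    [IsStronglyCoatomic ι] (hy : Antitone y) (hc : 0 < c)
    (hgap : ∀ i j, i ⋖ j → y j ≤ c⁻¹ * y i) {k i : ι} (hki : k < i) : c * y i ≤ y k := by
  obtain ⟨j, hkj, hji⟩ := exists_le_covBy_of_lt hki
  calc c * y i ≤ y j := (le_inv_mul_iff₀ hc).1 (hgap j i hji)
    _ ≤ y k := hy hkj

theorem Antitone.prod_sub_mul_mul_prod_mul_sub_nonneg [Field 𝕜] [LinearOrder 𝕜]
    [IsStrictOrderedRing 𝕜] [IsStronglyAtomic ι] [IsStronglyCoatomic ι] [LocallyFiniteOrderBot ι]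
    [LocallyFiniteOrderTop ι] (hy : Antitone y) (hc : 0 < c)
    (hgap : ∀ i j, i ⋖ j → y j ≤ c * y i) (hgap' : ∀ i j, i ⋖ j → y j ≤ c⁻¹ * y i) (i : ι) :
    0 ≤ (∏ k ∈ Iio i, (y k - c * y i)) * ∏ l ∈ Ioi i, (c * y i - y l) :=
  mul_nonneg (prod_nonneg fun _ hk ↦ sub_nonneg.2 (hy.mul_le_of_lt hc hgap' (mem_Iio.1 hk)))
    (prod_nonneg fun _ hl ↦ sub_nonneg.2 (hy.le_mul_of_lt hgap (mem_Ioi.1 hl)))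

end GapConditions

theorem vandermonde_ratio_nonneg_general
    (t : ℝ) (ht : 0 < t) (N : ℕ)
    (y : Fin N → ℝ)
    (hdec : ∀ i j : Fin N, i < j → y j < y i)
    (hgap : ∀ i : Fin N, ∀ h : (i : ℕ) + 1 < N,
      y ⟨(i : ℕ) + 1, h⟩ ≤ t * y i ∧ y ⟨(i : ℕ) + 1, h⟩ ≤ t⁻¹ * y i) :
    0 < (∏ i : Fin N, ∏ j ∈ Finset.Ioi i, (y i - y j)) ∧
    ∀ i : Fin N,
      (0 ≤ (∏ k ∈ Finset.Iio i, (y k - t * y i)) * ∏ l ∈ Finset.Ioi i, (t * y i - y l)) ∧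
      (0 ≤ (∏ k ∈ Finset.Iio i, (y k - t⁻¹ * y i)) * ∏ l ∈ Finset.Ioi i, (t⁻¹ * y i - y l)) := by
  have hy : StrictAnti y := fun i j ↦ hdec i j
  have hcov : ∀ i j : Fin N, i ⋖ j → y j ≤ t * y i ∧ y j ≤ t⁻¹ * y i := by
    intro i j hij
    rw [Fin.covBy_iff, Nat.covBy_iff_add_one_eq] at hij
    have h : (i : ℕ) + 1 < N := hij ▸ j.isLt
    obtain rfl : j = ⟨(i : ℕ) + 1, h⟩ := Fin.ext hij.symm
    exact hgap i h
  have hcov' : ∀ i j : Fin N, i ⋖ j → y j ≤ t⁻¹⁻¹ * y i := by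
    simpa only [inv_inv] using fun i j hij ↦ (hcov i j hij).1
  refine ⟨hy.prod_prod_Ioi_sub_pos, fun i ↦ ⟨?_, ?_⟩⟩
  · exact hy.antitone.prod_sub_mul_mul_prod_mul_sub_nonneg ht
      (fun i j hij ↦ (hcov i j hij).1) (fun i j hij ↦ (hcov i j hij).2) i
  · exact hy.antitone.prod_sub_mul_mul_prod_mul_sub_nonneg (inv_pos.2 ht)
      (fun i j hij ↦ (hcov i j hij).2) hcov' i

/-- Sign condition on Vandermonde ratios: for a strictly decreasing configuration
`y₁ > ... > y_N` whose consecutive coordinates satisfy `y_{i+1} ≤ t·y_i` and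
`y_{i+1} ≤ t⁻¹·y_i` (the q-lattice gap conditions), one has `V_N(Y) > 0` and, for
each `i` and each `ε ∈ {t, t⁻¹}`, `∏_{k<i}(y_k - ε y_i) · ∏_{l>i}(ε y_i - y_l) ≥ 0`. -/
theorem vandermonde_ratio_nonneg
    (t : ℝ) (ht : 0 < t) (ht1 : t < 1) (N : ℕ)
    (y : Fin N → ℝ)
    (hdec : ∀ i j : Fin N, i < j → y j < y i)
    (hgap : ∀ i : Fin N, ∀ h : (i : ℕ) + 1 < N,
      y ⟨(i : ℕ) + 1, h⟩ ≤ t * y i ∧ y ⟨(i : ℕ) + 1, h⟩ ≤ t⁻¹ * y i) :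
    0 < (∏ i : Fin N, ∏ j ∈ Finset.Ioi i, (y i - y j)) ∧
    ∀ i : Fin N,
      (0 ≤ (∏ k ∈ Finset.Iio i, (y k - t * y i)) * ∏ l ∈ Finset.Ioi i, (t * y i - y l)) ∧
      (0 ≤ (∏ k ∈ Finset.Iio i, (y k - t⁻¹ * y i)) * ∏ l ∈ Finset.Ioi i, (t⁻¹ * y i - y l)) :=
  vandermonde_ratio_nonneg_general t ht N y hdec hgap
end
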